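/- For the automaton over {a,b} with states q0,q1, start q0, accepting state q1, and rules (q0,ab,q1),(q1,b,q1), viewed as a GRLOWJFA, the accepted language is { b^m a b b^n : m,n ≥ 0 }. -/
import Mathlib


open List

/-- Two-letter alphabet. -/
inductive AB : Type | a | b
  deriving DecidableEq, Repr

/-- Three-letter alphabet. -/
inductive ABC : Type | a | b | c
  deriving DecidableEq, Repr

instance : Fintype AB := ⟨⟨{AB.a, AB.b}, by decide⟩, by intro x; cases x <;> decide⟩
instance : Fintype ABC := ⟨⟨{ABC.a, ABC.b, ABC.c}, by decide⟩, by intro x; cases x <;> decide⟩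

/-- The Dyck language over the two designated letters `a` (open) and `b` (close):
balanced words using only `a` and `b`. -/
def Dyck {α : Type} [DecidableEq α] (a b : α) : Set (List α) :=
  {w | (∀ x ∈ w, x = a ∨ x = b) ∧ w.count a = w.count b ∧
       ∀ u, u <+: w → u.count b ≤ u.count a}

/-- `u` contains no word from `S` as a subword (infix). -/
def NoSub {α : Type} (S : Set (List α)) (u : List α) : Prop :=
  ¬ ∃ w ∈ S, w <:+: u

/-! ### Right one-way jumping finite automata -/

structure ROWJFA (α σ : Type) where
  start : σ
  accept : Set σ
  rules : Set (σ × α × σ)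
  det : ∀ p a q q', (p, a, q) ∈ rules → (p, a, q') ∈ rules → q = q'

namespace ROWJFA
variable {α σ : Type}

def sig (A : ROWJFA α σ) (p : σ) : Set α := {a | ∃ q, (p, a, q) ∈ A.rules}

/-- `p x a y ↷ q y x` when `(p,a,q) ∈ R` and `x ∈ (Σ∖Σ_p)*`. -/
inductive Step (A : ROWJFA α σ) : σ × List α → σ × List α → Prop
  | jump {p q : σ} {a : α} (x y : List α) :
      (p, a, q) ∈ A.rules → (∀ b ∈ x, b ∉ A.sig p) →
      Step A (p, x ++ a :: y) (q, y ++ x)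

def language (A : ROWJFA α σ) : Set (List α) :=
  {w | ∃ qf ∈ A.accept, Relation.ReflTransGen (Step A) (A.start, w) (qf, [])}

end ROWJFA

def ROWJ {α : Type} (L : Set (List α)) : Prop :=
  ∃ (σ : Type) (_ : Finite σ) (A : ROWJFA α σ), A.language = L

/-! ### Left one-way jumping finite automata -/

structure LOWJFA (α σ : Type) where
  start : σ
  accept : Set σ
  /-- A rule `(q, a, p)` means: from state `p`, delete `a`, move to state `q`. -/
  rules : Set (σ × α × σ)
  det : ∀ p a q q', (q, a, p) ∈ rules → (q', a, p) ∈ rules → q = q'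

namespace LOWJFA
variable {α σ : Type}

def sig (A : LOWJFA α σ) (p : σ) : Set α := {a | ∃ q, (q, a, p) ∈ A.rules}

/-- `x y q ↶ y a x p` when `(q,a,p) ∈ R` and `x ∈ (Σ∖Σ_p)*`;
configurations are in `Σ* Q`. -/
inductive Step (A : LOWJFA α σ) : List α × σ → List α × σ → Prop
  | jump {p q : σ} {a : α} (x y : List α) :
      (q, a, p) ∈ A.rules → (∀ b ∈ x, b ∉ A.sig p) →
      Step A (y ++ a :: x, p) (x ++ y, q)

def language (A : LOWJFA α σ) : Set (List α) :=
  {w | ∃ qf ∈ A.accept, Relation.ReflTransGen (Step A) (w, A.start) ([], qf)}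

end LOWJFA

def LOWJ {α : Type} (L : Set (List α)) : Prop :=
  ∃ (σ : Type) (_ : Finite σ) (A : LOWJFA α σ), A.language = L

/-! ### Generalized right linear one-way jumping finite automata -/

structure GRLOWJFA (α σ : Type) where
  start : σ
  accept : Set σ
  rules : Set (σ × List α × σ)
  finite : rules.Finite
  ne : ∀ r ∈ rules, r.2.1 ≠ ([] : List α)
  det : ∀ p w q q', (p, w, q) ∈ rules → (p, w, q') ∈ rules → q = q'

namespace GRLOWJFA
variable {α σ : Type}

def sig (A : GRLOWJFA α σ) (p : σ) : Set (List α) := {w | ∃ q, (p, w, q) ∈ A.rules}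

/-- Configurations are triples `(t, p, v)` representing `t p v ∈ Σ* Q Σ*`. -/
inductive Step (A : GRLOWJFA α σ) :
    List α × σ × List α → List α × σ × List α → Prop
  /-- `t p u x v ↷ t u q v`. -/
  | rule {p q : σ} {x : List α} (t u v : List α) :
      (p, x, q) ∈ A.rules →
      NoSub (A.sig p) u →
      (¬ ∃ u₂ x₁ : List α, u₂ ≠ [] ∧ x₁ ≠ [] ∧ u₂ <:+ u ∧ x₁ <+: x ∧ u₂ ++ x₁ = x) →
      Step A (t, p, u ++ x ++ v) (t ++ u, q, v)
  /-- `x p y ↷ p x y`. -/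
  | ret {p : σ} (x y : List α) :
      x ≠ [] → NoSub (A.sig p) y →
      Step A (x, p, y) ([], p, x ++ y)

def language (A : GRLOWJFA α σ) : Set (List α) :=
  {w | ∃ qf ∈ A.accept, Relation.ReflTransGen (Step A) ([], A.start, w) ([], qf, [])}

end GRLOWJFA

def GRLOWJ {α : Type} (L : Set (List α)) : Prop :=
  ∃ (σ : Type) (_ : Finite σ) (A : GRLOWJFA α σ), A.language = L

/-! ### Generalized left linear one-way jumping finite automata -/

structure GLLOWJFA (α σ : Type) where
  start : σ
  accept : Set σ
  /-- A rule `(q, w, p)` means: from state `p`, delete `w`, move to state `q`. -/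
  rules : Set (σ × List α × σ)
  finite : rules.Finite
  ne : ∀ r ∈ rules, r.2.1 ≠ ([] : List α)
  det : ∀ p w q q', (q, w, p) ∈ rules → (q', w, p) ∈ rules → q = q'

namespace GLLOWJFA
variable {α σ : Type}

def sig (A : GLLOWJFA α σ) (p : σ) : Set (List α) := {w | ∃ q, (q, w, p) ∈ A.rules}

/-- Configurations are triples `(v, p, t)` representing `v p t ∈ Σ* Q Σ*`. -/
inductive Step (A : GLLOWJFA α σ) :
    List α × σ × List α → List α × σ × List α → Prop
  /-- `v q u t ↶ v x u p t`. -/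
  | rule {p q : σ} {x : List α} (t u v : List α) :
      (q, x, p) ∈ A.rules →
      NoSub (A.sig p) u →
      (¬ ∃ x₂ u₁ : List α, x₂ ≠ [] ∧ u₁ ≠ [] ∧ x₂ <:+ x ∧ u₁ <+: u ∧ x₂ ++ u₁ = x) →
      Step A (v ++ x ++ u, p, t) (v, q, u ++ t)
  /-- `y x p ↶ y p x`. -/
  | ret {p : σ} (x y : List α) :
      x ≠ [] → NoSub (A.sig p) y →
      Step A (y, p, x) (y ++ x, p, [])

def language (A : GLLOWJFA α σ) : Set (List α) :=
  {w | ∃ qf ∈ A.accept, Relation.ReflTransGen (Step A) (w, A.start, []) ([], qf, [])}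

end GLLOWJFA

def GLLOWJ {α : Type} (L : Set (List α)) : Prop :=
  ∃ (σ : Type) (_ : Finite σ) (A : GLLOWJFA α σ), A.language = L

inductive St2 : Type | q0 | q1
  deriving DecidableEq

/-- The GRLOWJFA of STATEMENT 2. -/
def A2 : GRLOWJFA AB St2 where
  start := St2.q0
  accept := {St2.q1}
  rules := {(St2.q0, [AB.a, AB.b], St2.q1), (St2.q1, [AB.b], St2.q1)}
  finite := (Set.finite_singleton _).insert _
  ne := by
    intro r hr
    simp only [Set.mem_insert_iff, Set.mem_singleton_iff] at hr
    rcases hr with rfl|rfl <;> simp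
  det := by
    intro p w q q' h h'
    simp only [Set.mem_insert_iff, Set.mem_singleton_iff] at h h'
    rcases h with h|h <;> rcases h' with h'|h' <;> simp_all

-- auxiliary lemmas to be inserted before stmt_2

lemma A2_rules_mem {p : St2} {x : List AB} {q : St2} :
    (p, x, q) ∈ A2.rules ↔
      (p = St2.q0 ∧ x = [AB.a, AB.b] ∧ q = St2.q1) ∨
      (p = St2.q1 ∧ x = [AB.b] ∧ q = St2.q1) := by
  simp [A2, Prod.ext_iff]

lemma sig_q1 : A2.sig St2.q1 = {[AB.b]} := by
  ext w
  constructor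
  · rintro ⟨q, hq⟩
    rw [A2_rules_mem] at hq
    rcases hq with ⟨h, _, _⟩ | ⟨_, rfl, _⟩
    · exact absurd h (by decide)
    · rfl
  · rintro rfl
    exact ⟨St2.q1, by rw [A2_rules_mem]; right; exact ⟨rfl, rfl, rfl⟩⟩

lemma noSub_q1_nil : NoSub (A2.sig St2.q1) [] := by
  rw [sig_q1]
  rintro ⟨w, hw, hinf⟩
  rw [Set.mem_singleton_iff] at hw
  subst hw
  simp at hinf

lemma noSub_q0_repb (m : ℕ) : NoSub (A2.sig St2.q0) (List.replicate m AB.b) := by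
  rintro ⟨w, ⟨q, hq⟩, hinf⟩
  rw [A2_rules_mem] at hq
  rcases hq with ⟨_, rfl, _⟩ | ⟨h, _, _⟩
  · have : AB.a ∈ List.replicate m AB.b := hinf.subset (by simp)
    have := List.eq_of_mem_replicate this
    exact absurd this (by decide)
  · exact absurd h (by decide)

lemma consume (t : List AB) (n : ℕ) :
    Relation.ReflTransGen (GRLOWJFA.Step A2)
      (t, St2.q1, List.replicate n AB.b) (t, St2.q1, []) := by
  induction n with
  | zero => exact .refl
  | succ k ih =>
    refine Relation.ReflTransGen.head ?_ ih
    have h := GRLOWJFA.Step.rule (A := A2) (p := St2.q1) (q := St2.q1)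
      (x := [AB.b]) t [] (List.replicate k AB.b)
      (by rw [A2_rules_mem]; right; exact ⟨rfl, rfl, rfl⟩)
      noSub_q1_nil
      (by rintro ⟨u₂, x₁, h1, h2, h3, -⟩; exact h1 (List.suffix_nil.mp h3))
    simpa [List.replicate_succ] using h

lemma inv (c : List AB × St2 × List AB)
    (h : Relation.ReflTransGen (GRLOWJFA.Step A2) c ([], St2.q1, [])) :
    c.2.1 = St2.q1 → ∀ x ∈ c.1 ++ c.2.2, x = AB.b := by
  induction h using Relation.ReflTransGen.head_induction_on with
  | refl => intro _ x hx; simp at hx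
  | head h' _ ih =>
    rename_i a c' _
    cases h' with
    | rule t u v hr hns hcond =>
      intro hp
      simp only at hp
      subst hp
      rw [A2_rules_mem] at hr
      rcases hr with ⟨h, _, _⟩ | ⟨_, rfl, rfl⟩
      · exact absurd h (by decide)
      · have := ih rfl
        simp only [List.mem_append] at this
        intro y hy
        have hy : y ∈ t ∨ y ∈ u ∨ y = AB.b ∨ y ∈ v := by simpa using hy
        rcases hy with hy | hy | rfl | hy
        · exact this y (Or.inl (Or.inl hy))
        · exact this y (Or.inl (Or.inr hy))
        · rfl
        · exact this y (Or.inr hy)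
    | ret x y hx hns =>
      intro hp
      simp only at hp
      subst hp
      have := ih rfl
      simp only [List.nil_append, List.mem_append] at this ⊢
      exact this

theorem stmt_2 :
    A2.language =
      {w : List AB | ∃ m n : ℕ,
        w = List.replicate m AB.b ++ [AB.a, AB.b] ++ List.replicate n AB.b} := by
  ext w
  simp only [GRLOWJFA.language, Set.mem_setOf_eq]
  constructor
  · rintro ⟨qf, hqf, hrun⟩
    have hq : qf = St2.q1 := hqf
    subst hq
    rcases hrun.cases_head with heq | ⟨c, hstep, hrun'⟩
    · exfalso
      have : St2.q0 = St2.q1 := congrArg (fun c => c.2.1) heq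
      exact absurd this (by decide)
    · cases hstep with
      | rule t u v hr hns hcond =>
        rw [A2_rules_mem] at hr
        rcases hr with ⟨_, rfl, rfl⟩ | ⟨h, _, _⟩
        · have hb := inv _ hrun' rfl
          simp only [List.nil_append, List.mem_append] at hb
          refine ⟨u.length, v.length, ?_⟩
          have hu : u = List.replicate u.length AB.b :=
            List.eq_replicate_of_mem (fun y hy => hb y (Or.inl hy))
          have hv : v = List.replicate v.length AB.b :=
            List.eq_replicate_of_mem (fun y hy => hb y (Or.inr hy))
          rw [← hu, ← hv, List.append_assoc]

        · exact absurd h (by decide)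
      | ret x y hx hns => exact absurd rfl hx
  · rintro ⟨m, n, rfl⟩
    refine ⟨St2.q1, rfl, ?_⟩
    have step1 : GRLOWJFA.Step A2
        ([], St2.q0, List.replicate m AB.b ++ [AB.a, AB.b] ++ List.replicate n AB.b)
        (List.replicate m AB.b, St2.q1, List.replicate n AB.b) := by
      have h := GRLOWJFA.Step.rule (A := A2) (p := St2.q0) (q := St2.q1)
        (x := [AB.a, AB.b]) [] (List.replicate m AB.b) (List.replicate n AB.b)
        (by rw [A2_rules_mem]; left; exact ⟨rfl, rfl, rfl⟩)
        (noSub_q0_repb m)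
        (by
          rintro ⟨u₂, x₁, h1, h2, h3, h4, h5⟩
          match u₂, h1 with
          | (y :: u₂'), _ =>
            have hy : y = AB.b := List.eq_of_mem_replicate (h3.subset (by simp))
            have hy' : y = AB.a := by
              have := congrArg (fun l => l.head?) h5
              simpa using this
            rw [hy] at hy'
            exact absurd hy' (by decide))
      simpa [List.append_assoc] using h
    refine Relation.ReflTransGen.head step1 ?_
    rcases Nat.eq_zero_or_pos m with rfl | hm
    · simpa using consume [] n
    · refine (consume _ n).trans ?_
      refine Relation.ReflTransGen.head ?_ (by simpa using consume [] m)
      have h := GRLOWJFA.Step.ret (A := A2) (List.replicate m AB.b) []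
        (by simp [Nat.pos_iff_ne_zero.mp hm]) noSub_q1_nil
      simpa using h
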